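/- arXiv:1704.08836 — 4 statements merged into one kernel-verified Lean document; each statement's English description precedes it below -/
import Mathlib

section
/- For a node n ∉ L in a coordination graph, the change in objective satisfies F(L ∪ {n}) − F(L) = Σ_{i ∈ N_in(n) \ (L ∪ {n})} ( max_{j ∈ N_out(i) ∩ (L ∪ {n})} w(i,j) − max_{j ∈ N_out(i) ∩ L} w(i,j) ) − max_{j ∈ N_out(n) ∩ L} w(n,j). -/
open Finset

/-- Out-neighborhood of `i` in the edge set `E`. -/
def Nout {V : Type*} [Fintype V] [DecidableEq V] (E : Finset (V × V)) (i : V) : Finset V :=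
  univ.filter (fun j => (i, j) ∈ E)

/-- In-neighborhood of `i` in the edge set `E`. -/
def Nin {V : Type*} [Fintype V] [DecidableEq V] (E : Finset (V × V)) (i : V) : Finset V :=
  univ.filter (fun j => (j, i) ∈ E)

/-- Maximum of `f` over `s`, with the maximum over the empty set defined to be `0`. -/
def maxw {V : Type*} (s : Finset V) (f : V → ℝ) : ℝ :=
  s.fold max 0 f

/-- The clustering objective `F(L)`. -/
def Fobj {V : Type*} [Fintype V] [DecidableEq V] (E : Finset (V × V)) (w : V × V → ℝ)
    (L : Finset V) : ℝ :=
  ∑ i ∈ univ \ L, maxw ((Nout E i) ∩ L) (fun j => w (i, j))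

/-!
Making `n` a leader removes its own term from `F`, and it changes the term of another follower `i`
only if `n` is an out-neighbour of `i`, i.e. only if `i ∈ N_in(n)`.
-/

section

variable {V : Type*} [Fintype V] [DecidableEq V] (E : Finset (V × V)) (w : V × V → ℝ)

theorem mem_Nin {i n : V} : i ∈ Nin E n ↔ (i, n) ∈ E := by
  simp [Nin]

theorem Nout_inter_union_singleton_of_notMem {i n : V} (h : (i, n) ∉ E) (L : Finset V) :
    Nout E i ∩ (L ∪ {n}) = Nout E i ∩ L := by
  rw [inter_union_distrib_left, union_eq_left, subset_iff]
  intro j hj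
  obtain ⟨hij, rfl⟩ : (i, j) ∈ E ∧ j = n := by simpa [Nout] using hj
  exact absurd hij h

theorem Fobj_union_singleton_sub {L : Finset V} {n : V} (hn : n ∉ L) :
    Fobj E w (L ∪ {n}) - Fobj E w L =
      (∑ i ∈ univ \ (L ∪ {n}),
        (maxw (Nout E i ∩ (L ∪ {n})) (fun j => w (i, j))
          - maxw (Nout E i ∩ L) (fun j => w (i, j))))
      - maxw (Nout E n ∩ L) (fun j => w (n, j)) := by
  have hfollowers : univ \ (L ∪ {n}) = (univ \ L).erase n := by
    rw [union_singleton, sdiff_insert]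
  have hn' : n ∈ univ \ L := by simpa using hn
  rw [Fobj, Fobj, hfollowers, ← sum_erase_add _ _ hn', sub_add_eq_sub_sub, ← sum_sub_distrib]

end

theorem stmt3_general {V : Type*} [Fintype V] [DecidableEq V] (E : Finset (V × V)) (w : V × V → ℝ)
    (L : Finset V) (n : V) (hn : n ∉ L) :
    Fobj E w (L ∪ {n}) - Fobj E w L =
      (∑ i ∈ Nin E n \ (L ∪ {n}),
        (maxw ((Nout E i) ∩ (L ∪ {n})) (fun j => w (i, j))
          - maxw ((Nout E i) ∩ L) (fun j => w (i, j))))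
      - maxw ((Nout E n) ∩ L) (fun j => w (n, j)) := by
  rw [Fobj_union_singleton_sub E w hn]
  congr 1
  refine (sum_subset (sdiff_subset_sdiff (subset_univ _) le_rfl) fun i hfollower hi => ?_).symm
  have hin : (i, n) ∉ E := fun h => hi (mem_sdiff.2 ⟨(mem_Nin E).2 h, (mem_sdiff.1 hfollower).2⟩)
  rw [Nout_inter_union_singleton_of_notMem E hin, sub_self]

/-- Change of the objective when adding a node `n ∉ L` to the leader set. -/
theorem stmt3 {V : Type*} [Fintype V] [DecidableEq V] (E : Finset (V × V)) (w : V × V → ℝ)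
    (hw : ∀ e ∈ E, 0 < w e) (hloop : ∀ v : V, (v, v) ∉ E)
    (L : Finset V) (n : V) (hn : n ∉ L) :
    Fobj E w (L ∪ {n}) - Fobj E w L =
      (∑ i ∈ Nin E n \ (L ∪ {n}),
        (maxw ((Nout E i) ∩ (L ∪ {n})) (fun j => w (i, j))
          - maxw ((Nout E i) ∩ L) (fun j => w (i, j))))
      - maxw ((Nout E n) ∩ L) (fun j => w (n, j)) :=
  stmt3_general E w L n hn
end

section
/- For a node n ∈ L in a coordination graph, F(L \ {n}) − F(L) = Σ_{i ∈ N_in(n) \ L} ( max_{j ∈ N_out(i) ∩ (L \ {n})} w(i,j) − max_{j ∈ N_out(i) ∩ L} w(i,j) ) + max_{j ∈ N_out(n) ∩ (L \ {n})} w(n,j). -/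
open Finset

theorem mem_Nin_iff_mem_Nout {V : Type*} [Fintype V] [DecidableEq V] {E : Finset (V × V)}
    {i n : V} : i ∈ Nin E n ↔ n ∈ Nout E i := by
  simp [Nin, Nout]

theorem univ_sdiff_sdiff_singleton {V : Type*} [Fintype V] [DecidableEq V] (L : Finset V)
    (n : V) : univ \ (L \ {n}) = insert n (univ \ L) := by
  rw [sdiff_sdiff_eq_sdiff_union (subset_univ _), union_singleton]

theorem inter_sdiff_singleton_of_notMem {V : Type*} [DecidableEq V] {s : Finset V}
    (L : Finset V) {n : V} (hn : n ∉ s) : s ∩ (L \ {n}) = s ∩ L := by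
  rw [← inter_sdiff_assoc, sdiff_singleton_eq_erase,
    erase_eq_of_notMem (notMem_mono inter_subset_left hn)]

theorem Fobj_sdiff_singleton {V : Type*} [Fintype V] [DecidableEq V] (E : Finset (V × V))
    (w : V × V → ℝ) {L : Finset V} {n : V} (hn : n ∈ L) :
    Fobj E w (L \ {n}) =
      ∑ i ∈ univ \ L, maxw (Nout E i ∩ (L \ {n})) (fun j => w (i, j))
        + maxw (Nout E n ∩ (L \ {n})) (fun j => w (n, j)) := by
  rw [Fobj, univ_sdiff_sdiff_singleton, sum_insert (by simp [hn]), add_comm]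

/-- Only in-neighbours of `n` can lose a leader when `n` is removed. -/
theorem sum_maxw_sdiff_singleton_sub_eq_sum_Nin {V : Type*} [Fintype V] [DecidableEq V]
    (E : Finset (V × V)) (w : V × V → ℝ) (L : Finset V) (n : V) :
    ∑ i ∈ univ \ L, (maxw (Nout E i ∩ (L \ {n})) (fun j => w (i, j))
        - maxw (Nout E i ∩ L) (fun j => w (i, j))) =
      ∑ i ∈ Nin E n \ L, (maxw (Nout E i ∩ (L \ {n})) (fun j => w (i, j))
        - maxw (Nout E i ∩ L) (fun j => w (i, j))) := by
  refine (sum_subset (sdiff_subset_sdiff (subset_univ _) le_rfl) fun i hi hiNin => ?_).symm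
  have hnNout : n ∉ Nout E i := fun h =>
    hiNin (mem_sdiff.2 ⟨mem_Nin_iff_mem_Nout.2 h, (mem_sdiff.1 hi).2⟩)
  rw [inter_sdiff_singleton_of_notMem L hnNout, sub_self]

theorem stmt4_general {V : Type*} [Fintype V] [DecidableEq V] (E : Finset (V × V)) (w : V × V → ℝ)
    (L : Finset V) (n : V) (hn : n ∈ L) :
    Fobj E w (L \ {n}) - Fobj E w L =
      (∑ i ∈ Nin E n \ L,
        (maxw ((Nout E i) ∩ (L \ {n})) (fun j => w (i, j))
          - maxw ((Nout E i) ∩ L) (fun j => w (i, j))))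
      + maxw ((Nout E n) ∩ (L \ {n})) (fun j => w (n, j)) := by
  rw [Fobj_sdiff_singleton E w hn, Fobj, ← sum_maxw_sdiff_singleton_sub_eq_sum_Nin,
    sum_sub_distrib]
  ring

/-- Change of the objective when removing a node `n ∈ L` from the leader set. -/
theorem stmt4 {V : Type*} [Fintype V] [DecidableEq V] (E : Finset (V × V)) (w : V × V → ℝ)
    (hw : ∀ e ∈ E, 0 < w e) (hloop : ∀ v : V, (v, v) ∉ E)
    (L : Finset V) (n : V) (hn : n ∈ L) :
    Fobj E w (L \ {n}) - Fobj E w L =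
      (∑ i ∈ Nin E n \ L,
        (maxw ((Nout E i) ∩ (L \ {n})) (fun j => w (i, j))
          - maxw ((Nout E i) ∩ L) (fun j => w (i, j))))
      + maxw ((Nout E n) ∩ (L \ {n})) (fun j => w (n, j)) :=
  stmt4_general E w L n hn
end

section
/- In the set-cover reduction graph, removing any element-node from the leader set never decreases the objective: for u ∈ N_B ∩ L, F(L \ {u}) ≥ F(L). Hence there exists an optimal leader set L* with L* ∩ N_B = ∅. -/
open Finset

/-- Node type of the set-cover reduction graph: element-nodes `N_B`, set-nodes `N_A`,
and one sink node `n₀`. -/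
abbrev RNode (U : Type*) := (U ⊕ Finset U) ⊕ Unit

/-- The sink node `n₀`. -/
def sink (U : Type*) : RNode U := Sum.inr ()

/-- The element-node corresponding to `u ∈ U`. -/
def elemNode {U : Type*} (u : U) : RNode U := Sum.inl (Sum.inl u)

/-- The set-node corresponding to `S ∈ 𝔽`. -/
def setNode {U : Type*} (S : Finset U) : RNode U := Sum.inl (Sum.inr S)

/-- Edges of the reduction graph: `(u, S)` whenever `u ∈ S ∈ 𝔽`, and `(S, n₀)` for `S ∈ 𝔽`. -/
def REdges (U : Type*) [Fintype U] [DecidableEq U] (𝔽 : Finset (Finset U)) :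
    Finset (RNode U × RNode U) :=
  univ.filter (fun e =>
    (∃ u : U, ∃ S ∈ 𝔽, u ∈ S ∧ e = (elemNode u, setNode S)) ∨
    (∃ S ∈ 𝔽, e = (setNode S, sink U)))

/-- Weights of the reduction graph: weight `1` on element-to-set edges and `1/2`
on set-to-sink edges. -/
noncomputable def Rw (U : Type*) : RNode U × RNode U → ℝ := fun e =>
  match e with
  | (Sum.inl (Sum.inl _), Sum.inl (Sum.inr _)) => 1
  | (Sum.inl (Sum.inr _), Sum.inr _) => 1 / 2
  | _ => 0

lemma maxw_nonneg {V : Type*} (s : Finset V) (f : V → ℝ) : 0 ≤ maxw s f :=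
  (le_fold_max 0).2 (Or.inl le_rfl)

section NoInEdges

variable {V : Type*} [Fintype V] [DecidableEq V] {E : Finset (V × V)} {A : Finset V}

lemma Nout_inter_sdiff_of_disjoint (hA : ∀ i, Disjoint (Nout E i) A) (i : V) (L : Finset V) :
    Nout E i ∩ (L \ A) = Nout E i ∩ L := by
  rw [← inter_sdiff_assoc, sdiff_eq_self_of_disjoint ((hA i).mono_left inter_subset_left)]

/-- A node without in-edges is nobody's leader, so dropping it from `L` leaves every other
term of the objective unchanged and adds its own, nonnegative, term. -/
lemma Fobj_le_Fobj_sdiff (w : V × V → ℝ) (hA : ∀ i, Disjoint (Nout E i) A) (L : Finset V) :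
    Fobj E w L ≤ Fobj E w (L \ A) := by
  unfold Fobj
  simp_rw [Nout_inter_sdiff_of_disjoint hA]
  exact sum_le_sum_of_subset_of_nonneg (sdiff_subset_sdiff le_rfl sdiff_subset)
    fun i _ _ => maxw_nonneg _ _

end NoInEdges

lemma elemNode_notMem_Nout {U : Type*} [Fintype U] [DecidableEq U] (𝔽 : Finset (Finset U))
    (i : RNode U) (u : U) : elemNode u ∉ Nout (REdges U 𝔽) i := by
  simp only [Nout, REdges, mem_filter, mem_univ, true_and, not_or, not_exists, not_and]
  constructor <;> intros <;> simp [Prod.ext_iff, elemNode, setNode, sink]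

lemma disjoint_Nout_image_elemNode {U : Type*} [Fintype U] [DecidableEq U]
    (𝔽 : Finset (Finset U)) (i : RNode U) :
    Disjoint (Nout (REdges U 𝔽) i) (univ.image elemNode) := by
  simp only [disjoint_right, mem_image, mem_univ, true_and]
  rintro _ ⟨u, rfl⟩
  exact elemNode_notMem_Nout 𝔽 i u

/-- In the set-cover reduction graph, removing an element-node from the leader set never
decreases the objective; hence there is an optimal leader set containing no element-node. -/
theorem stmt14 (U : Type*) [Fintype U] [DecidableEq U] (𝔽 : Finset (Finset U)) :
    (∀ (L : Finset (RNode U)) (u : U), elemNode u ∈ L →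
      Fobj (REdges U 𝔽) (Rw U) L ≤ Fobj (REdges U 𝔽) (Rw U) (L.erase (elemNode u))) ∧
    (∃ Lstar : Finset (RNode U),
      (∀ L : Finset (RNode U), Fobj (REdges U 𝔽) (Rw U) L ≤ Fobj (REdges U 𝔽) (Rw U) Lstar) ∧
      ∀ u : U, elemNode u ∉ Lstar) := by
  have hdrop := Fobj_le_Fobj_sdiff (Rw U) (disjoint_Nout_image_elemNode 𝔽)
  refine ⟨fun L u _ => ?_, ?_⟩
  · rw [← sdiff_singleton_eq_erase]
    refine Fobj_le_Fobj_sdiff (Rw U) (fun i => ?_) L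
    exact disjoint_singleton_right.2 (elemNode_notMem_Nout 𝔽 i u)
  · obtain ⟨M, -, hM⟩ :=
      exists_max_image univ (Fobj (REdges U 𝔽) (Rw U)) ⟨∅, mem_univ ∅⟩
    refine ⟨M \ univ.image elemNode, fun L => (hM L (mem_univ L)).trans (hdrop M),
      fun u hu => ?_⟩
    exact (mem_sdiff.1 hu).2 (mem_image_of_mem _ (mem_univ u))
end

section
/- In the set-cover reduction graph, if L ⊆ N_A ∪ {n₀} contains n₀, then F(L) = |{u ∈ N_B : ∃ S ∈ L ∩ N_A, u ∈ S}| + (|N_A| − |L ∩ N_A|)/2; i.e., the objective equals the number of covered elements plus half the number of non-leader set-nodes. -/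
open Finset

/-!
Element nodes are never leaders, and an element node pays weight `1` exactly when one of
the sets containing it is a leader. A set node outside `L` has `n₀ ∈ L` as its only
out-neighbour and pays `1/2`, and `n₀` itself pays nothing.
-/

theorem maxw_eq_ite_nonempty {V : Type*} {s : Finset V} {f : V → ℝ} {c : ℝ} (hc : 0 ≤ c)
    (h : ∀ x ∈ s, f x = c) : maxw s f = if s.Nonempty then c else 0 := by
  classical
  induction s using Finset.induction with
  | empty => simp [maxw]
  | insert a s ha ih =>
    have hmax : maxw (insert a s) f = max (f a) (maxw s f) := by
      simp only [maxw, fold_insert ha]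
    rw [hmax, h a (mem_insert_self a s), ih fun x hx => h x (mem_insert_of_mem hx)]
    split_ifs <;> simp_all

section Objective

variable {V : Type*} [Fintype V] [DecidableEq V]

def nodeCost (E : Finset (V × V)) (w : V × V → ℝ) (L : Finset V) (i : V) : ℝ :=
  maxw (Nout E i ∩ L) (fun j => w (i, j))

theorem Fobj_eq_sum_ite (E : Finset (V × V)) (w : V × V → ℝ) (L : Finset V) :
    Fobj E w L = ∑ i, if i ∈ L then 0 else nodeCost E w L i := by
  rw [Fobj, sdiff_eq_filter, sum_filter]
  simp only [ite_not, nodeCost]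

end Objective

section ReductionGraph

variable {U : Type*} [Fintype U] [DecidableEq U] {𝔽 : Finset (Finset U)}

theorem mem_Nout_elemNode {u : U} {x : RNode U} :
    x ∈ Nout (REdges U 𝔽) (elemNode u) ↔ ∃ S ∈ 𝔽, u ∈ S ∧ x = setNode S := by
  rw [Nout, mem_filter, REdges, mem_filter]
  simp [elemNode, setNode, sink]

theorem mem_Nout_setNode {S : Finset U} {x : RNode U} :
    x ∈ Nout (REdges U 𝔽) (setNode S) ↔ S ∈ 𝔽 ∧ x = sink U := by
  rw [Nout, mem_filter, REdges, mem_filter]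
  simp [elemNode, setNode, sink]

theorem nodeCost_elemNode (L : Finset (RNode U)) (u : U) :
    nodeCost (REdges U 𝔽) (Rw U) L (elemNode u) =
      if ∃ S ∈ 𝔽, setNode S ∈ L ∧ u ∈ S then 1 else 0 := by
  rw [nodeCost, maxw_eq_ite_nonempty zero_le_one]
  · congr 1
    simp only [Finset.Nonempty, mem_inter, mem_Nout_elemNode]
    grind
  · intro x hx
    obtain ⟨S, -, -, rfl⟩ := mem_Nout_elemNode.1 (mem_inter.1 hx).1
    rfl

theorem nodeCost_setNode {L : Finset (RNode U)} (hn0 : sink U ∈ L) (S : Finset U) :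
    nodeCost (REdges U 𝔽) (Rw U) L (setNode S) = if S ∈ 𝔽 then 1 / 2 else 0 := by
  rw [nodeCost, maxw_eq_ite_nonempty (c := 1 / 2) (by norm_num)]
  · congr 1
    simp only [Finset.Nonempty, mem_inter, mem_Nout_setNode]
    grind
  · intro x hx
    obtain ⟨-, rfl⟩ := mem_Nout_setNode.1 (mem_inter.1 hx).1
    rfl

theorem Fobj_reduction_eq {L : Finset (RNode U)} (hn0 : sink U ∈ L) :
    Fobj (REdges U 𝔽) (Rw U) L =
      (∑ u, if elemNode u ∈ L then 0 else nodeCost (REdges U 𝔽) (Rw U) L (elemNode u)) +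
        ∑ S, if setNode S ∈ L then 0 else nodeCost (REdges U 𝔽) (Rw U) L (setNode S) := by
  rw [Fobj_eq_sum_ite, Fintype.sum_sum_type, Fintype.sum_sum_type,
    Fintype.sum_unique (ι := Unit)]
  exact (congrArg _ (if_pos hn0)).trans (add_zero _)

end ReductionGraph

/-- In the set-cover reduction graph, if `L ⊆ N_A ∪ {n₀}` contains `n₀`, then the objective
equals the number of covered elements plus half the number of non-leader set-nodes. -/
theorem stmt15 (U : Type*) [Fintype U] [DecidableEq U] (𝔽 : Finset (Finset U))
    (L : Finset (RNode U))
    (hL : ∀ x ∈ L, x = sink U ∨ ∃ S ∈ 𝔽, x = setNode S)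
    (hn0 : sink U ∈ L) :
    Fobj (REdges U 𝔽) (Rw U) L =
      ((univ.filter (fun u : U => ∃ S ∈ 𝔽, setNode S ∈ L ∧ u ∈ S)).card : ℝ)
        + (((𝔽.card : ℝ) - ((𝔽.filter (fun S => setNode S ∈ L)).card : ℝ)) / 2) := by
  have helem (u : U) : elemNode u ∉ L := fun hu => by
    rcases hL _ hu with h | ⟨S, -, h⟩ <;> simp [elemNode, sink, setNode] at h
  rw [Fobj_reduction_eq hn0]
  simp only [helem, if_false, nodeCost_elemNode, nodeCost_setNode hn0, sum_boole]
  have hsets : (∑ S : Finset U, if setNode S ∈ L then 0 else if S ∈ 𝔽 then (1 / 2 : ℝ) else 0) =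
      #(𝔽.filter fun S => setNode S ∉ L) / 2 := by
    rw [sum_ite, sum_const_zero, zero_add, ← sum_filter, sum_const, nsmul_eq_mul, filter_comm, filter_mem_eq_inter, univ_inter]
    ring
  have hsplit := card_filter_add_card_filter_not (s := 𝔽) (fun S => setNode S ∈ L)
  rw [hsets, ← hsplit]
  push_cast
  ring
end
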